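/- (Orientation invariance of the direction-integrated SECT, as used in DETECT.) Let K be a finite geometric simplicial complex in ℝ^d with all vertices in the closed ball B(0,R), R > 0, let ρ : ℝ^d → ℝ^d be a linear isometry, and let ρK denote the image complex. Then for every t ∈ [-R, R], the integral of the smooth Euler characteristic curve over all directions with respect to the (isometry-invariant) spherical measure is unchanged: ∫_{S^{d-1}} SECC_ω^{ρK}(t) dω = ∫_{S^{d-1}} SECC_ω^{K}(t) dω. -/

import Mathlib

open scoped Classical BigOperators

/-- The simplex-wise function `f_ω(σ) = max_{v ∈ σ} ⟨v, ω⟩`. -/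
noncomputable def fdir {d : ℕ} (ω : EuclideanSpace ℝ (Fin d))
    (σ : Finset (EuclideanSpace ℝ (Fin d))) : ℝ :=
  if h : σ.Nonempty then σ.sup' h (fun v => (inner ℝ v ω : ℝ)) else 0

/-- Euler characteristic of a finite collection of simplices (given by vertex sets):
`χ(L) = Σ_p (-1)^p c_p(L)` where a `p`-simplex has `p+1` vertices. -/
noncomputable def eulerChar {d : ℕ} (F : Finset (Finset (EuclideanSpace ℝ (Fin d)))) : ℤ :=
  ∑ p ∈ Finset.range (F.sup Finset.card),
    (-1 : ℤ) ^ p * ((F.filter fun σ => σ.card = p + 1).card : ℤ)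

/-- The sublevel complex `K_a = {σ ∈ K : f_ω(σ) ≤ a}` (on the level of face sets). -/
noncomputable def sublevel {d : ℕ} (F : Finset (Finset (EuclideanSpace ℝ (Fin d))))
    (ω : EuclideanSpace ℝ (Fin d)) (a : ℝ) : Finset (Finset (EuclideanSpace ℝ (Fin d))) :=
  F.filter fun σ => fdir ω σ ≤ a

/-- The Euler characteristic curve `ECC_ω(a) = χ(K_a)`. -/
noncomputable def ECC {d : ℕ} (F : Finset (Finset (EuclideanSpace ℝ (Fin d))))
    (ω : EuclideanSpace ℝ (Fin d)) (a : ℝ) : ℤ :=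
  eulerChar (sublevel F ω a)

/-- The average value `avg_ω = (1/(2R)) ∫_{-R}^R ECC_ω(a) da`. -/
noncomputable def eccAvg {d : ℕ} (F : Finset (Finset (EuclideanSpace ℝ (Fin d))))
    (ω : EuclideanSpace ℝ (Fin d)) (R : ℝ) : ℝ :=
  (1 / (2 * R)) * ∫ a in (-R)..R, (ECC F ω a : ℝ)

/-- The smooth Euler characteristic curve `SECC_ω(t) = ∫_{-R}^t (ECC_ω(a) - avg_ω) da`. -/
noncomputable def SECC {d : ℕ} (F : Finset (Finset (EuclideanSpace ℝ (Fin d))))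
    (ω : EuclideanSpace ℝ (Fin d)) (R t : ℝ) : ℝ :=
  ∫ a in (-R)..t, ((ECC F ω a : ℝ) - eccAvg F ω R)

/-! Since `ρ` preserves inner products, `f_ω(ρσ) = f_{ρ⁻¹ω}(σ)`, and since it is injective it
preserves the number of vertices of each simplex; hence `SECC_ω^{ρK} = SECC_{ρ⁻¹ω}^K`. The
substitution `ω ↦ ρ⁻¹ω` maps the unit sphere onto itself and preserves Hausdorff measure. -/

open MeasureTheory

section Image

variable {d : ℕ}

lemma fdir_image (ρ : EuclideanSpace ℝ (Fin d) ≃ₗᵢ[ℝ] EuclideanSpace ℝ (Fin d))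
    (ω : EuclideanSpace ℝ (Fin d)) (σ : Finset (EuclideanSpace ℝ (Fin d))) :
    fdir ω (σ.image ρ) = fdir (ρ.symm ω) σ := by
  unfold fdir
  rcases σ.eq_empty_or_nonempty with rfl | hσ
  · simp
  · rw [dif_pos (hσ.image ρ), dif_pos hσ, Finset.sup'_image]
    refine Finset.sup'_congr _ rfl fun v _ => ?_
    simpa using ρ.inner_map_map v (ρ.symm ω)

lemma eulerChar_image_of_injective {f : EuclideanSpace ℝ (Fin d) → EuclideanSpace ℝ (Fin d)}
    (hf : Function.Injective f) (G : Finset (Finset (EuclideanSpace ℝ (Fin d)))) :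
    eulerChar (G.image fun σ => σ.image f) = eulerChar G := by
  have hcard (σ : Finset (EuclideanSpace ℝ (Fin d))) : (σ.image f).card = σ.card :=
    Finset.card_image_of_injective σ hf
  have hsup : (G.image fun σ => σ.image f).sup Finset.card = G.sup Finset.card := by
    rw [Finset.sup_image]
    exact Finset.sup_congr rfl fun σ _ => hcard σ
  unfold eulerChar
  rw [hsup]
  refine Finset.sum_congr rfl fun p _ => ?_
  rw [Finset.filter_image, Finset.card_image_of_injective _ (Finset.image_injective hf)]
  simp only [hcard]

lemma sublevel_image (ρ : EuclideanSpace ℝ (Fin d) ≃ₗᵢ[ℝ] EuclideanSpace ℝ (Fin d))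
    (F : Finset (Finset (EuclideanSpace ℝ (Fin d)))) (ω : EuclideanSpace ℝ (Fin d)) (a : ℝ) :
    sublevel (F.image fun σ => σ.image ρ) ω a
      = (sublevel F (ρ.symm ω) a).image fun σ => σ.image ρ := by
  simp only [sublevel, Finset.filter_image, fdir_image]

lemma ECC_image (ρ : EuclideanSpace ℝ (Fin d) ≃ₗᵢ[ℝ] EuclideanSpace ℝ (Fin d))
    (F : Finset (Finset (EuclideanSpace ℝ (Fin d)))) (ω : EuclideanSpace ℝ (Fin d)) (a : ℝ) :
    ECC (F.image fun σ => σ.image ρ) ω a = ECC F (ρ.symm ω) a := by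
  rw [ECC, sublevel_image, eulerChar_image_of_injective ρ.injective, ECC]

lemma SECC_image (ρ : EuclideanSpace ℝ (Fin d) ≃ₗᵢ[ℝ] EuclideanSpace ℝ (Fin d))
    (F : Finset (Finset (EuclideanSpace ℝ (Fin d)))) (ω : EuclideanSpace ℝ (Fin d)) (R t : ℝ) :
    SECC (F.image fun σ => σ.image ρ) ω R t = SECC F (ρ.symm ω) R t := by
  simp only [SECC, eccAvg, ECC_image]

end Image

lemma LinearIsometryEquiv.setIntegral_sphere_comp {E : Type*} [NormedAddCommGroup E]
    [NormedSpace ℝ E] [MeasurableSpace E] [BorelSpace E]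
    (ρ : E ≃ₗᵢ[ℝ] E) (g : E → ℝ) (r s : ℝ) :
    ∫ ω in Metric.sphere (0 : E) r, g (ρ ω) ∂(μH[s])
      = ∫ ω in Metric.sphere (0 : E) r, g ω ∂(μH[s]) := by
  have hpre : ρ ⁻¹' Metric.sphere 0 r = Metric.sphere 0 r := by
    ext x
    simp
  have hsubst := (ρ.toIsometryEquiv.measurePreserving_hausdorffMeasure s).setIntegral_preimage_emb
    ρ.toHomeomorph.measurableEmbedding g (Metric.sphere 0 r)
  rwa [LinearIsometryEquiv.coe_toIsometryEquiv, hpre] at hsubst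

theorem SECT_direction_integral_rotation_invariant_general {d : ℕ}
    (K : Geometry.SimplicialComplex ℝ (EuclideanSpace ℝ (Fin d)))
    (hK : K.faces.Finite) (R : ℝ)
    (ρ : EuclideanSpace ℝ (Fin d) ≃ₗᵢ[ℝ] EuclideanSpace ℝ (Fin d)) :
    ∀ t ∈ Set.Icc (-R) R,
      (∫ ω in Metric.sphere (0 : EuclideanSpace ℝ (Fin d)) 1,
          SECC (hK.toFinset.image fun σ => σ.image ρ) ω R t ∂(μH[(d : ℝ) - 1]))
        = ∫ ω in Metric.sphere (0 : EuclideanSpace ℝ (Fin d)) 1,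
            SECC hK.toFinset ω R t ∂(μH[(d : ℝ) - 1]) := by
  intro t _
  simp only [SECC_image]
  exact ρ.symm.setIntegral_sphere_comp (fun ω => SECC hK.toFinset ω R t) 1 _

/-- Orientation invariance of the direction-integrated SECT (as used in DETECT): for a
linear isometry `ρ` of `ℝ^d`, integrating the smooth Euler characteristic curve over all
directions of the unit sphere (w.r.t. the isometry-invariant spherical measure, here the
`(d-1)`-dimensional Hausdorff measure on the sphere) is unchanged by rotating the complex. -/
theorem SECT_direction_integral_rotation_invariant {d : ℕ}
    (K : Geometry.SimplicialComplex ℝ (EuclideanSpace ℝ (Fin d)))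
    (hK : K.faces.Finite) (R : ℝ) (hR : 0 < R)
    (hball : ∀ σ ∈ K.faces, ∀ v ∈ σ, ‖v‖ ≤ R)
    (ρ : EuclideanSpace ℝ (Fin d) ≃ₗᵢ[ℝ] EuclideanSpace ℝ (Fin d)) :
    ∀ t ∈ Set.Icc (-R) R,
      (∫ ω in Metric.sphere (0 : EuclideanSpace ℝ (Fin d)) 1,
          SECC (hK.toFinset.image fun σ => σ.image ρ) ω R t ∂(μH[(d : ℝ) - 1]))
        = ∫ ω in Metric.sphere (0 : EuclideanSpace ℝ (Fin d)) 1,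
            SECC hK.toFinset ω R t ∂(μH[(d : ℝ) - 1]) :=
  SECT_direction_integral_rotation_invariant_general K hK R ρ
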